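/- arXiv:2410.21124 — 4 statements merged into one kernel-verified Lean document; each statement's English description precedes it below -/
import Mathlib

section
/- Let J be the Choi matrix of a quantum channel from a finite-dimensional system A to a finite-dimensional system B, and let M ≥ 1 be a real number. Then suc^NS(J, M) ≥ (1 − 1/M)·suc^MC(J, M). -/
/-!
Let `(ρ, Λ)` be feasible for the meta-converse program, `T = Tr_R Λ ≼ I_B` and `c = 1 - 1/M`.
The completion `Λ' = c Λ + ρ ⊗ (I_B - c T)` has `Tr_R Λ' = c T + (I_B - c T) = I_B` and
`Λ' ≽ c Λ`, and since `(1 - c) M = 1`,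
`M (ρ ⊗ I_B) - Λ' = c (M (ρ ⊗ I_B) - Λ) + c (ρ ⊗ T) ≽ 0`.
So `(ρ, Λ')` is non-signaling feasible, with value at least `c` times that of `(ρ, Λ)`.
-/

open Matrix Kronecker Filter ComplexOrder

namespace QCoding

/-- Partial trace over the first tensor factor. -/
noncomputable def trFst {R B : Type*} [Fintype R]
    (Λ : Matrix (R × B) (R × B) ℂ) : Matrix B B ℂ :=
  fun b b' => ∑ r, Λ (r, b) (r, b')

/-- Partial trace over the second tensor factor. -/
noncomputable def trSnd {R B : Type*} [Fintype B]
    (Λ : Matrix (R × B) (R × B) ℂ) : Matrix R R ℂ :=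
  fun r r' => ∑ b, Λ (r, b) (r', b)

/-- A quantum state: positive semidefinite with unit trace. -/
def IsState {n : Type*} [Fintype n] (ρ : Matrix n n ℂ) : Prop :=
  ρ.PosSemidef ∧ ρ.trace = 1

/-- A Choi matrix of a quantum channel: positive semidefinite with
partial trace over the output system equal to the identity. -/
def IsChoi {A B : Type*} [Fintype A] [Fintype B] [DecidableEq A]
    (J : Matrix (A × B) (A × B) ℂ) : Prop :=
  J.PosSemidef ∧ trSnd J = 1

/-- The non-signaling success probability: supremum of `(1/M) Tr[Λ J]` over states `ρ`
and `Λ` with `0 ≼ Λ ≼ M (ρ ⊗ I_B)` and `Tr_R Λ = I_B`. -/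
noncomputable def sucNS {A B : Type*} [Fintype A] [Fintype B] [DecidableEq B]
    (J : Matrix (A × B) (A × B) ℂ) (M : ℝ) : ℝ :=
  sSup {x | ∃ ρ : Matrix A A ℂ, ∃ Λ : Matrix (A × B) (A × B) ℂ,
    IsState ρ ∧ Λ.PosSemidef ∧
    ((M : ℂ) • (ρ ⊗ₖ (1 : Matrix B B ℂ)) - Λ).PosSemidef ∧
    trFst Λ = 1 ∧ x = (1 / M) * (Λ * J).trace.re}

/-- The meta-converse success probability: as `sucNS` but with `Tr_R Λ ≼ I_B`. -/
noncomputable def sucMC {A B : Type*} [Fintype A] [Fintype B] [DecidableEq B]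
    (J : Matrix (A × B) (A × B) ℂ) (M : ℝ) : ℝ :=
  sSup {x | ∃ ρ : Matrix A A ℂ, ∃ Λ : Matrix (A × B) (A × B) ℂ,
    IsState ρ ∧ Λ.PosSemidef ∧
    ((M : ℂ) • (ρ ⊗ₖ (1 : Matrix B B ℂ)) - Λ).PosSemidef ∧
    ((1 : Matrix B B ℂ) - trFst Λ).PosSemidef ∧
    x = (1 / M) * (Λ * J).trace.re}

/-- The fixed-input non-signaling success probability: supremum of `Tr[Λ J]` over `Λ`
with `0 ≼ Λ ≼ ρ ⊗ I_B` and `Tr_R Λ = (1/M) I_B`. -/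
noncomputable def sucNSFixed {A B : Type*} [Fintype A] [Fintype B] [DecidableEq B]
    (J : Matrix (A × B) (A × B) ℂ) (M : ℝ) (ρ : Matrix A A ℂ) : ℝ :=
  sSup {x | ∃ Λ : Matrix (A × B) (A × B) ℂ, Λ.PosSemidef ∧
    ((ρ ⊗ₖ (1 : Matrix B B ℂ)) - Λ).PosSemidef ∧
    trFst Λ = ((1 / M : ℂ)) • (1 : Matrix B B ℂ) ∧
    x = (Λ * J).trace.re}

/-- Apply a real function spectrally to a Hermitian matrix (junk value `0` otherwise). -/
noncomputable def hermApply {n : Type*} [Fintype n] [DecidableEq n]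
    (H : Matrix n n ℂ) (f : ℝ → ℝ) : Matrix n n ℂ :=
  if h : H.IsHermitian then
    (h.eigenvectorUnitary : Matrix n n ℂ) *
      Matrix.diagonal (fun i => (f (h.eigenvalues i) : ℂ)) *
      (star (h.eigenvectorUnitary : Matrix n n ℂ))
  else 0

/-- Real (spectral) power of a positive semidefinite matrix, with the Moore-Penrose
convention: for `p ≠ 0` the eigenvalue `0` is mapped to `(0:ℝ) ^ p = 0`.
In particular `matRPow ρ (1/2)` is the positive semidefinite square root of `ρ` and
`matRPow ρ (-(1/2))` is the Moore-Penrose pseudo-inverse of that square root. -/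
noncomputable def matRPow {n : Type*} [Fintype n] [DecidableEq n]
    (H : Matrix n n ℂ) (p : ℝ) : Matrix n n ℂ :=
  hermApply H (fun x => x ^ p)

/-- Positive part of a Hermitian matrix: each eigenvalue `λ` is replaced by `max λ 0`. -/
noncomputable def posPart {n : Type*} [Fintype n] [DecidableEq n]
    (H : Matrix n n ℂ) : Matrix n n ℂ :=
  hermApply H (fun x => max x 0)

/-- Support inclusion for positive semidefinite matrices: the kernel of `σ` is
contained in the kernel of `ρ`, i.e. the support of `ρ` is contained in that of `σ`. -/
def SuppLe {n : Type*} [Fintype n] (ρ σ : Matrix n n ℂ) : Prop :=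
  ∀ v : n → ℂ, σ.mulVec v = 0 → ρ.mulVec v = 0

/-- The sandwiched Rényi divergence of order `α` (finite-value formula, meaningful when
the support of `ρ` is contained in that of `σ`). -/
noncomputable def sandDiv {n : Type*} [Fintype n] [DecidableEq n]
    (α : ℝ) (ρ σ : Matrix n n ℂ) : ℝ :=
  (α - 1)⁻¹ * Real.log
    ((matRPow (matRPow σ ((1 - α) / (2 * α)) * ρ * matRPow σ ((1 - α) / (2 * α))) α).trace.re)

/-- The channel's sandwiched Rényi mutual information of order `α`:
`sup_ρ inf_σ D̃_α((ρ^{1/2} ⊗ I_B) J (ρ^{1/2} ⊗ I_B) ‖ ρ ⊗ σ)`, the infimum being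
restricted to those `σ` for which the support condition holds (the divergence is `+∞`
otherwise, so such `σ` never contribute to the infimum). -/
noncomputable def sandMI {A B : Type*} [Fintype A] [Fintype B] [DecidableEq A] [DecidableEq B]
    (α : ℝ) (J : Matrix (A × B) (A × B) ℂ) : ℝ :=
  sSup {x | ∃ ρ : Matrix A A ℂ, IsState ρ ∧
    x = sInf {y | ∃ σ : Matrix B B ℂ, IsState σ ∧
      SuppLe ((matRPow ρ (1/2) ⊗ₖ (1 : Matrix B B ℂ)) * J *
          (matRPow ρ (1/2) ⊗ₖ (1 : Matrix B B ℂ))) (ρ ⊗ₖ σ) ∧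
      y = sandDiv α ((matRPow ρ (1/2) ⊗ₖ (1 : Matrix B B ℂ)) * J *
          (matRPow ρ (1/2) ⊗ₖ (1 : Matrix B B ℂ))) (ρ ⊗ₖ σ)}}

/-- Choi matrix of the `n`-fold tensor power channel. -/
noncomputable def choiPow {A B : Type*} (J : Matrix (A × B) (A × B) ℂ) (n : ℕ) :
    Matrix ((Fin n → A) × (Fin n → B)) ((Fin n → A) × (Fin n → B)) ℂ :=
  fun p q => ∏ k : Fin n, J (p.1 k, p.2 k) (q.1 k, q.2 k)

/-- Action of the channel with Choi matrix `C` (from `S` to `T`) on the first tensor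
factor of a bipartite matrix on `S × E`. -/
noncomputable def chanApply {S T E : Type*} [Fintype S]
    (C : Matrix (S × T) (S × T) ℂ) (X : Matrix (S × E) (S × E) ℂ) :
    Matrix (T × E) (T × E) ℂ :=
  fun p q => ∑ s : S, ∑ s' : S, C (s, p.1) (s', q.1) * X (s, p.2) (s', q.2)

/-- The entanglement-assisted success probability for `M` messages: supremum over a
shared pure entangled state `ψ` on `Fin d × Fin d`, encoding channels `K m` from `E_A`
to `A` (Choi matrices), and a POVM `Ξ` on `B × E_B`, of the average probability of
correct decoding. -/
noncomputable def sucEA {A B : Type*} [Fintype A] [Fintype B] [DecidableEq B]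
    (J : Matrix (A × B) (A × B) ℂ) (M : ℕ) : ℝ :=
  sSup {x | ∃ d : ℕ, 1 ≤ d ∧
    ∃ ψ : Fin d × Fin d → ℂ, (∑ i, Complex.normSq (ψ i)) = 1 ∧
    ∃ K : Fin M → Matrix (Fin d × A) (Fin d × A) ℂ,
      (∀ m, (K m).PosSemidef ∧ trSnd (K m) = 1) ∧
    ∃ Ξ : Fin M → Matrix (B × Fin d) (B × Fin d) ℂ,
      (∀ m, (Ξ m).PosSemidef) ∧ (∑ m, Ξ m) = 1 ∧
      x = (1 / (M : ℝ)) *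
        ∑ m, ((Ξ m) * chanApply J (chanApply (K m) (Matrix.vecMulVec ψ (star ψ)))).trace.re}

open scoped MatrixOrder in
theorem _root_.Matrix.PosSemidef.trace_mul_nonneg {𝕜 n : Type*} [RCLike 𝕜] [Fintype n]
    {P Q : Matrix n n 𝕜} (hP : P.PosSemidef) (hQ : Q.PosSemidef) : 0 ≤ (P * Q).trace := by
  classical
  obtain ⟨S, rfl⟩ := CStarAlgebra.nonneg_iff_eq_star_mul_self.mp hP.nonneg
  rw [star_eq_conjTranspose, Matrix.mul_assoc, trace_mul_comm]
  exact (hQ.mul_mul_conjTranspose_same S).trace_nonneg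

theorem re_trace_mul_le_of_posSemidef_sub {n : Type*} [Fintype n] {X Y J : Matrix n n ℂ}
    (hXY : (Y - X).PosSemidef) (hJ : J.PosSemidef) : (X * J).trace.re ≤ (Y * J).trace.re := by
  have h := hXY.trace_mul_nonneg hJ
  rw [Matrix.sub_mul, trace_sub, sub_nonneg] at h
  exact Complex.re_le_re h

section PartialTrace

variable {R B : Type*} [Fintype R]

theorem trFst_add (X Y : Matrix (R × B) (R × B) ℂ) : trFst (X + Y) = trFst X + trFst Y := by
  ext b b'
  simp [trFst, Finset.sum_add_distrib]

theorem trFst_smul (c : ℂ) (X : Matrix (R × B) (R × B) ℂ) :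
    trFst (c • X) = c • trFst X := by
  ext b b'
  simp [trFst, Finset.mul_sum]

theorem trFst_kronecker (ρ : Matrix R R ℂ) (D : Matrix B B ℂ) :
    trFst (ρ ⊗ₖ D) = ρ.trace • D := by
  ext b b'
  simp [trFst, trace, Finset.sum_mul]

theorem posSemidef_trFst {Λ : Matrix (R × B) (R × B) ℂ} (hΛ : Λ.PosSemidef) :
    (trFst Λ).PosSemidef := by
  have h : trFst Λ = ∑ r, Λ.submatrix (Prod.mk r) (Prod.mk r) := by
    ext b b'
    simp [trFst, Matrix.sum_apply]
  exact h ▸ posSemidef_sum _ fun r _ => hΛ.submatrix _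

theorem trace_kronecker_one_mul [Fintype B] [DecidableEq R] [DecidableEq B]
    (ρ : Matrix R R ℂ) (J : Matrix (R × B) (R × B) ℂ) :
    ((ρ ⊗ₖ (1 : Matrix B B ℂ)) * J).trace = (ρ * trSnd J).trace := by
  simp only [trace, diag_apply, mul_apply, kroneckerMap_apply, one_apply, mul_ite, mul_one,
    mul_zero, ite_mul, zero_mul, Fintype.sum_prod_type, Finset.sum_ite_eq, Finset.mem_univ, ↓reduceIte, trSnd,
    Finset.mul_sum]
  exact Finset.sum_congr rfl fun _ _ => Finset.sum_comm

end PartialTrace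

section Completion

variable {A B : Type*} [Fintype A] [DecidableEq B]

noncomputable def nsCompletion (c : ℝ) (ρ : Matrix A A ℂ) (Λ : Matrix (A × B) (A × B) ℂ) :
    Matrix (A × B) (A × B) ℂ :=
  (c : ℂ) • Λ + ρ ⊗ₖ (1 - (c : ℂ) • trFst Λ)

variable {c : ℝ} {ρ : Matrix A A ℂ} {Λ : Matrix (A × B) (A × B) ℂ}

theorem trFst_nsCompletion (hρ : ρ.trace = 1) : trFst (nsCompletion c ρ Λ) = 1 := by
  rw [nsCompletion, trFst_add, trFst_smul, trFst_kronecker, hρ, one_smul, add_sub_cancel]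

theorem posSemidef_one_sub_smul_trFst (hT : (1 - trFst Λ).PosSemidef)
    (hc0 : 0 ≤ c) (hc1 : c ≤ 1) : (1 - (c : ℂ) • trFst Λ).PosSemidef := by
  have h : 1 - (c : ℂ) • trFst Λ
      = ((1 - c : ℝ) : ℂ) • 1 + (c : ℂ) • (1 - trFst Λ) := by
    push_cast
    module
  rw [h]
  exact (PosSemidef.one.smul (by exact_mod_cast sub_nonneg.mpr hc1)).add
    (hT.smul (by exact_mod_cast hc0))

theorem posSemidef_nsCompletion [Fintype B] (hρ : ρ.PosSemidef) (hΛ : Λ.PosSemidef)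
    (hT : (1 - trFst Λ).PosSemidef) (hc0 : 0 ≤ c) (hc1 : c ≤ 1) :
    (nsCompletion c ρ Λ).PosSemidef :=
  (hΛ.smul (by exact_mod_cast hc0)).add
    (hρ.kronecker (posSemidef_one_sub_smul_trFst hT hc0 hc1))

theorem mul_re_trace_mul_le_nsCompletion [Fintype B] {J : Matrix (A × B) (A × B) ℂ}
    (hJ : J.PosSemidef) (hρ : ρ.PosSemidef) (hT : (1 - trFst Λ).PosSemidef)
    (hc0 : 0 ≤ c) (hc1 : c ≤ 1) :
    c * (Λ * J).trace.re ≤ (nsCompletion c ρ Λ * J).trace.re := by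
  have h := re_trace_mul_le_of_posSemidef_sub (X := (c : ℂ) • Λ) (Y := nsCompletion c ρ Λ)
    (by rw [nsCompletion, add_sub_cancel_left]
        exact hρ.kronecker (posSemidef_one_sub_smul_trFst hT hc0 hc1)) hJ
  rwa [Matrix.smul_mul, trace_smul, smul_eq_mul, Complex.re_ofReal_mul] at h

theorem posSemidef_smul_kronecker_one_sub_nsCompletion [Fintype B] {M : ℝ}
    (hcM : (1 - c) * M = 1) (hρ : ρ.PosSemidef) (hΛ : Λ.PosSemidef)
    (hle : ((M : ℂ) • (ρ ⊗ₖ (1 : Matrix B B ℂ)) - Λ).PosSemidef) (hc0 : 0 ≤ c) :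
    ((M : ℂ) • (ρ ⊗ₖ (1 : Matrix B B ℂ)) - nsCompletion c ρ Λ).PosSemidef := by
  have hcM' : ((1 - c) * M : ℂ) = 1 := by exact_mod_cast hcM
  have h : (M : ℂ) • (ρ ⊗ₖ (1 : Matrix B B ℂ)) - nsCompletion c ρ Λ
      = (c : ℂ) • ((M : ℂ) • (ρ ⊗ₖ (1 : Matrix B B ℂ)) - Λ)
        + (c : ℂ) • (ρ ⊗ₖ trFst Λ) := by
    have hkron : ρ ⊗ₖ (1 - (c : ℂ) • trFst Λ)
        = ρ ⊗ₖ (1 : Matrix B B ℂ) - (c : ℂ) • (ρ ⊗ₖ trFst Λ) := by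
      ext
      simp [mul_sub, mul_left_comm]
    rw [nsCompletion, hkron]
    linear_combination (norm := module) hcM' • (ρ ⊗ₖ (1 : Matrix B B ℂ))
  rw [h]
  exact (hle.smul (by exact_mod_cast hc0)).add
    ((hρ.kronecker (posSemidef_trFst hΛ)).smul (by exact_mod_cast hc0))

end Completion

section SuccessProbability

variable {A B : Type*} [Fintype A] [Fintype B] [DecidableEq B]
  {J : Matrix (A × B) (A × B) ℂ} {M : ℝ}

theorem sucNS_nonneg (hJ : J.PosSemidef) (hM : 0 ≤ M) : 0 ≤ sucNS J M := by
  refine Real.sSup_nonneg ?_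
  rintro _ ⟨ρ, Λ, -, hΛ, -, -, rfl⟩
  exact mul_nonneg (by positivity) (Complex.re_le_re (hΛ.trace_mul_nonneg hJ))

theorem re_trace_mul_choi_le [DecidableEq A] (hJ : IsChoi J) {ρ : Matrix A A ℂ}
    {Λ : Matrix (A × B) (A × B) ℂ} (hρ : IsState ρ)
    (hle : ((M : ℂ) • (ρ ⊗ₖ (1 : Matrix B B ℂ)) - Λ).PosSemidef) :
    (Λ * J).trace.re ≤ M := by
  calc (Λ * J).trace.re ≤ (((M : ℂ) • (ρ ⊗ₖ (1 : Matrix B B ℂ))) * J).trace.re :=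
        re_trace_mul_le_of_posSemidef_sub hle hJ.1
    _ = M := by
        rw [Matrix.smul_mul, trace_smul, trace_kronecker_one_mul, hJ.2, Matrix.mul_one, hρ.2]
        simp

theorem le_sucNS [DecidableEq A] (hJ : IsChoi J) (hM : 0 < M) {ρ : Matrix A A ℂ}
    {Λ : Matrix (A × B) (A × B) ℂ} (hρ : IsState ρ) (hΛ : Λ.PosSemidef)
    (hle : ((M : ℂ) • (ρ ⊗ₖ (1 : Matrix B B ℂ)) - Λ).PosSemidef) (htr : trFst Λ = 1) :
    1 / M * (Λ * J).trace.re ≤ sucNS J M := by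
  refine le_csSup ⟨1, ?_⟩ ⟨ρ, Λ, hρ, hΛ, hle, htr, rfl⟩
  rintro _ ⟨ρ', Λ', hρ', -, hle', -, rfl⟩
  rw [one_div, inv_mul_le_one₀ hM]
  exact re_trace_mul_choi_le hJ hρ' hle'

end SuccessProbability

theorem sucNS_ge_sucMC_general {A B : Type*} [Fintype A] [DecidableEq A]
    [Fintype B] [DecidableEq B]
    (J : Matrix (A × B) (A × B) ℂ) (hJ : IsChoi J)
    (M : ℝ) (hM : 1 ≤ M) :
    (1 - 1 / M) * sucMC J M ≤ sucNS J M := by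
  have hM0 : 0 < M := by linarith
  have hc0 : 0 ≤ 1 - 1 / M := by rw [sub_nonneg, div_le_one hM0]; exact hM
  have hc1 : 1 - 1 / M ≤ 1 := by simp only [sub_le_self_iff]; positivity
  have hcM : (1 - (1 - 1 / M)) * M = 1 := by rw [sub_sub_cancel, one_div_mul_cancel hM0.ne']
  refine (Real.sSup_smul_of_nonneg hc0 _).symm.le.trans
    (Real.sSup_le ?_ (sucNS_nonneg hJ.1 hM0.le))
  rintro _ ⟨_, ⟨ρ, Λ, hρ, hΛ, hle, hT, rfl⟩, rfl⟩
  calc (1 - 1 / M) • (1 / M * (Λ * J).trace.re)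
      = 1 / M * ((1 - 1 / M) * (Λ * J).trace.re) := by rw [smul_eq_mul]; ring
    _ ≤ 1 / M * (nsCompletion (1 - 1 / M) ρ Λ * J).trace.re := by
        gcongr
        exact mul_re_trace_mul_le_nsCompletion hJ.1 hρ.1 hT hc0 hc1
    _ ≤ sucNS J M :=
        le_sucNS hJ hM0 hρ (posSemidef_nsCompletion hρ.1 hΛ hT hc0 hc1)
          (posSemidef_smul_kronecker_one_sub_nsCompletion hcM hρ.1 hΛ hle hc0)
          (trFst_nsCompletion hρ.2)

/-- For a Choi matrix `J` and `M ≥ 1`,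
`suc^NS(J, M) ≥ (1 − 1/M) · suc^MC(J, M)`. -/
theorem sucNS_ge_sucMC {A B : Type*} [Fintype A] [DecidableEq A] [Nonempty A]
    [Fintype B] [DecidableEq B]
    (J : Matrix (A × B) (A × B) ℂ) (hJ : IsChoi J)
    (M : ℝ) (hM : 1 ≤ M) :
    (1 - 1 / M) * sucMC J M ≤ sucNS J M :=
  sucNS_ge_sucMC_general J hJ M hM

end QCoding
end

section
/- Let J be the Choi matrix of a quantum channel from a finite-dimensional system A to a finite-dimensional system B, let M ≥ 1 be a real number, let ρ be a quantum state on R ≅ A (positive semidefinite with trace 1), and let Λ be a matrix on R × B with 0 ≼ Λ ≼ ρ ⊗ I_B and Tr_R Λ = (1/M)·I_B. Define O := (ρ^{−1/2} ⊗ I_B)·Λ·(ρ^{−1/2} ⊗ I_B), where ρ^{−1/2} is the Moore–Penrose pseudo-inverse of the positive semidefinite square root of ρ. Then: (i) 0 ≼ O ≼ I_{R×B}; (ii) Tr[O · (ρ^{1/2} ⊗ I_B)·J·(ρ^{1/2} ⊗ I_B)] = Tr[Λ·J]; and (iii) for every quantum state σ on B, Tr[O · (ρ ⊗ σ)] = 1/M.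 -/
/-!
Let `P` be the projection onto the support of `ρ`. The spectral calculus gives
`ρ^{-1/2} ρ ρ^{-1/2} = ρ^{-1/2} ρ^{1/2} = ρ^{1/2} ρ^{-1/2} = P ≤ 1` and `ρ P = P ρ = ρ`.
Since `0 ≤ Λ ≤ ρ ⊗ I` and `ρ ⊗ I` vanishes on the range of `(1 - P) ⊗ I`, so does `Λ`, hence
`Λ (P ⊗ I) = (P ⊗ I) Λ = Λ`. Conjugating `Λ ≤ ρ ⊗ I` by `ρ^{-1/2} ⊗ I` gives `O ≤ P ⊗ I ≤ I`, and by
cyclicity of the trace the two trace identities reduce to `Tr[(P ⊗ I) Λ (P ⊗ I) J] = Tr[Λ J]` and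
`Tr[Λ (P ⊗ σ)] = Tr[(Tr_R Λ) σ] = Tr σ / M`.
-/

open Matrix Kronecker Filter ComplexOrder

theorem Real.rpow_neg_half_mul_rpow_half {x : ℝ} (hx : 0 ≤ x) :
    x ^ (-(1/2) : ℝ) * x ^ (1/2 : ℝ) = if x = 0 then 0 else 1 := by
  rcases hx.eq_or_lt with rfl | hx
  · simp
  · rw [if_neg hx.ne', ← Real.rpow_add hx]
    norm_num

theorem Real.rpow_neg_half_mul_mul_rpow_neg_half {x : ℝ} (hx : 0 ≤ x) :
    x ^ (-(1/2) : ℝ) * x * x ^ (-(1/2) : ℝ) = if x = 0 then 0 else 1 := by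
  rcases hx.eq_or_lt with rfl | hx
  · simp
  · have hinv : x ^ (-(1/2) : ℝ) * x ^ (-(1/2) : ℝ) = x⁻¹ := by
      rw [← Real.rpow_add hx]; norm_num [Real.rpow_neg_one]
    rw [if_neg hx.ne', mul_right_comm, hinv, inv_mul_cancel₀ hx.ne']

namespace Matrix

variable {𝕜 n : Type*} [RCLike 𝕜] [Fintype n] {Λ R E : Matrix n n 𝕜}

theorem PosSemidef.mul_eq_zero_of_sub_posSemidef (hΛ : Λ.PosSemidef) (hle : (R - Λ).PosSemidef)
    {Q : Matrix n n 𝕜} (hRQ : R * Q = 0) : Λ * Q = 0 := by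
  have hΛQv : ∀ v, Λ *ᵥ (Q *ᵥ v) = 0 := by
    intro v
    have hRv : R *ᵥ (Q *ᵥ v) = 0 := by rw [mulVec_mulVec, hRQ, zero_mulVec]
    have hle_v := hle.dotProduct_mulVec_nonneg (Q *ᵥ v)
    rw [sub_mulVec, hRv, zero_sub, dotProduct_neg, neg_nonneg] at hle_v
    exact (hΛ.dotProduct_mulVec_zero_iff _).mp (le_antisymm hle_v (hΛ.dotProduct_mulVec_nonneg _))
  exact ext_iff_mulVec.mpr fun v => by rw [← mulVec_mulVec, hΛQv, zero_mulVec]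

theorem PosSemidef.mul_eq_left_of_sub_posSemidef [DecidableEq n] (hΛ : Λ.PosSemidef)
    (hle : (R - Λ).PosSemidef) (hRE : R * E = R) : Λ * E = Λ := by
  have := hΛ.mul_eq_zero_of_sub_posSemidef hle (Q := 1 - E) <| by
    rw [mul_sub, hRE, mul_one, sub_self]
  rwa [mul_sub, mul_one, sub_eq_zero, eq_comm] at this

theorem PosSemidef.mul_eq_right_of_sub_posSemidef [DecidableEq n] (hΛ : Λ.PosSemidef)
    (hle : (R - Λ).PosSemidef) (hER : E * R = R) : E * Λ = Λ := by
  have hR : R.IsHermitian := by simpa using hle.1.add hΛ.1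
  have hREh : R * Eᴴ = R := by rw [← hR.eq, ← conjTranspose_mul, hER, hR.eq]
  simpa [hΛ.1.eq] using congrArg (·ᴴ) (hΛ.mul_eq_left_of_sub_posSemidef hle hREh)

end Matrix

namespace QCoding

open scoped MatrixOrder

section FunctionalCalculus

variable {n : Type*} [Fintype n] [DecidableEq n] {ρ : Matrix n n ℂ}

lemma hermApply_eq_cfc (hρ : ρ.IsHermitian) (f : ℝ → ℝ) : hermApply ρ f = cfc f ρ := by
  rw [hρ.cfc_eq, hermApply, dif_pos hρ, IsHermitian.cfc, Unitary.conjStarAlgAut_apply]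
  rfl

lemma matRPow_eq_cfc (hρ : ρ.IsHermitian) (p : ℝ) : matRPow ρ p = cfc (fun x : ℝ => x ^ p) ρ :=
  hermApply_eq_cfc hρ _

lemma matRPow_isHermitian (hρ : ρ.IsHermitian) (p : ℝ) : (matRPow ρ p).IsHermitian := by
  rw [matRPow_eq_cfc hρ]
  exact cfc_predicate _ ρ

noncomputable def supportProj (ρ : Matrix n n ℂ) : Matrix n n ℂ :=
  cfc (fun x : ℝ => if x = 0 then 0 else 1) ρ

lemma posSemidef_one_sub_supportProj (ρ : Matrix n n ℂ) : (1 - supportProj ρ).PosSemidef :=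
  cfc_le_one _ ρ fun x _ => by split_ifs <;> norm_num

variable (hρ : ρ.PosSemidef)
include hρ

lemma matRPow_neg_half_mul_matRPow_half :
    matRPow ρ (-(1/2)) * matRPow ρ (1/2) = supportProj ρ := by
  have hc : ∀ f : ℝ → ℝ, ContinuousOn f (spectrum ℝ ρ) := ρ.finite_real_spectrum.continuousOn
  rw [matRPow_eq_cfc hρ.1, matRPow_eq_cfc hρ.1, ← cfc_mul _ _ _ (hc _) (hc _)]
  exact cfc_congr fun x hx =>
    Real.rpow_neg_half_mul_rpow_half (spectrum_nonneg_of_nonneg hρ.nonneg hx)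

lemma matRPow_half_mul_matRPow_neg_half :
    matRPow ρ (1/2) * matRPow ρ (-(1/2)) = supportProj ρ := by
  have hcomm := cfc_commute_cfc (fun x : ℝ => x ^ (1/2 : ℝ)) (fun x : ℝ => x ^ (-(1/2) : ℝ)) ρ
  rw [← matRPow_eq_cfc hρ.1, ← matRPow_eq_cfc hρ.1] at hcomm
  rw [hcomm.eq, matRPow_neg_half_mul_matRPow_half hρ]

lemma matRPow_neg_half_mul_mul_matRPow_neg_half :
    matRPow ρ (-(1/2)) * ρ * matRPow ρ (-(1/2)) = supportProj ρ := by
  have hc : ∀ f : ℝ → ℝ, ContinuousOn f (spectrum ℝ ρ) := ρ.finite_real_spectrum.continuousOn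
  calc matRPow ρ (-(1/2)) * ρ * matRPow ρ (-(1/2))
      = cfc (fun x : ℝ => x ^ (-(1/2) : ℝ)) ρ * cfc (fun x : ℝ => x) ρ *
          cfc (fun x : ℝ => x ^ (-(1/2) : ℝ)) ρ := by
        rw [matRPow_eq_cfc hρ.1, cfc_id' ℝ ρ hρ.1.isSelfAdjoint]
    _ = supportProj ρ := by
        rw [← cfc_mul _ _ _ (hc _) (hc _), ← cfc_mul _ _ _ (hc _) (hc _)]
        exact cfc_congr fun x hx =>
          Real.rpow_neg_half_mul_mul_rpow_neg_half (spectrum_nonneg_of_nonneg hρ.nonneg hx)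

lemma mul_supportProj : ρ * supportProj ρ = ρ := by
  have hc : ∀ f : ℝ → ℝ, ContinuousOn f (spectrum ℝ ρ) := ρ.finite_real_spectrum.continuousOn
  conv_rhs => rw [← cfc_id' ℝ ρ hρ.1.isSelfAdjoint]
  nth_rw 1 [← cfc_id' ℝ ρ hρ.1.isSelfAdjoint]
  rw [supportProj, ← cfc_mul _ _ _ (hc _) (hc _)]
  exact cfc_congr fun x _ => by split_ifs with h <;> simp [h]

lemma supportProj_mul : supportProj ρ * ρ = ρ := by
  have hcomm := cfc_commute_cfc (fun x : ℝ => if x = 0 then 0 else 1) (fun x : ℝ => x) ρ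
  rw [cfc_id' ℝ ρ hρ.1.isSelfAdjoint] at hcomm
  exact hcomm.eq.trans (mul_supportProj hρ)

end FunctionalCalculus

lemma matRPow_kronecker_one_isHermitian {A B : Type*} [Fintype A] [DecidableEq A] [DecidableEq B]
    {ρ : Matrix A A ℂ} (hρ : ρ.IsHermitian) (p : ℝ) :
    (matRPow ρ p ⊗ₖ (1 : Matrix B B ℂ)).IsHermitian := by
  rw [IsHermitian, conjTranspose_kronecker, (matRPow_isHermitian hρ p).eq, conjTranspose_one]

lemma trace_mul_one_kronecker {R B : Type*} [Fintype R] [DecidableEq R] [Fintype B]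
    (Λ : Matrix (R × B) (R × B) ℂ) (σ : Matrix B B ℂ) :
    (Λ * ((1 : Matrix R R ℂ) ⊗ₖ σ)).trace = (trFst Λ * σ).trace := by
  simp only [trace, diag_apply, mul_apply, kroneckerMap_apply, one_apply, ite_mul, one_mul,
    zero_mul, mul_ite, mul_zero, Fintype.sum_prod_type, Finset.sum_ite_irrel, Finset.sum_const_zero,
    Finset.sum_ite_eq', Finset.mem_univ, ↓reduceIte, trFst, Finset.sum_mul]
  exact Finset.sum_comm.trans (Finset.sum_congr rfl fun _ _ => Finset.sum_comm)

noncomputable def nsObservable {A B : Type*} [Fintype A] [DecidableEq A] [Fintype B]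
    [DecidableEq B]
    (ρ : Matrix A A ℂ) (Λ : Matrix (A × B) (A × B) ℂ) : Matrix (A × B) (A × B) ℂ :=
  (matRPow ρ (-(1/2)) ⊗ₖ (1 : Matrix B B ℂ)) * Λ * (matRPow ρ (-(1/2)) ⊗ₖ (1 : Matrix B B ℂ))

section Observable

variable {A B : Type*} [Fintype A] [DecidableEq A] [Fintype B] [DecidableEq B]
  {ρ : Matrix A A ℂ} {Λ : Matrix (A × B) (A × B) ℂ}

lemma nsObservable_posSemidef (hρ : ρ.IsHermitian) (hΛ : Λ.PosSemidef) :
    (nsObservable ρ Λ).PosSemidef := by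
  unfold nsObservable
  simpa only [(matRPow_kronecker_one_isHermitian hρ _).eq] using
    hΛ.conjTranspose_mul_mul_same (matRPow ρ (-(1/2)) ⊗ₖ (1 : Matrix B B ℂ))

variable (hρ : ρ.PosSemidef) (hΛle : (ρ ⊗ₖ (1 : Matrix B B ℂ) - Λ).PosSemidef)
include hρ hΛle

lemma posSemidef_one_sub_nsObservable : (1 - nsObservable ρ Λ).PosSemidef := by
  set X := matRPow ρ (-(1/2)) ⊗ₖ (1 : Matrix B B ℂ)
  have hX : Xᴴ = X := (matRPow_kronecker_one_isHermitian hρ.1 _).eq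
  have hXRX : X * (ρ ⊗ₖ 1) * X = supportProj ρ ⊗ₖ 1 := by
    rw [← mul_kronecker_mul, ← mul_kronecker_mul, matRPow_neg_half_mul_mul_matRPow_neg_half hρ,
      one_mul, one_mul]
  have hO_le : nsObservable ρ Λ ≤ supportProj ρ ⊗ₖ 1 := by
    have h := hΛle.conjTranspose_mul_mul_same X
    rwa [hX, mul_sub, sub_mul, hXRX] at h
  have hP_le : supportProj ρ ⊗ₖ (1 : Matrix B B ℂ) ≤ 1 := by
    have hkron : (1 - supportProj ρ) ⊗ₖ (1 : Matrix B B ℂ) = 1 - supportProj ρ ⊗ₖ 1 := by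
      rw [eq_sub_iff_add_eq, ← add_kronecker, sub_add_cancel, one_kronecker_one]
    rw [le_iff, ← hkron]
    exact (posSemidef_one_sub_supportProj ρ).kronecker PosSemidef.one
  exact hO_le.trans hP_le

variable (hΛ : Λ.PosSemidef)
include hΛ

lemma mul_supportProj_kronecker_one : Λ * (supportProj ρ ⊗ₖ (1 : Matrix B B ℂ)) = Λ :=
  hΛ.mul_eq_left_of_sub_posSemidef hΛle <| by
    rw [← mul_kronecker_mul, mul_supportProj hρ, one_mul]

lemma supportProj_kronecker_one_mul : (supportProj ρ ⊗ₖ (1 : Matrix B B ℂ)) * Λ = Λ :=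
  hΛ.mul_eq_right_of_sub_posSemidef hΛle <| by
    rw [← mul_kronecker_mul, supportProj_mul hρ, one_mul]

lemma trace_nsObservable_mul_conj (J : Matrix (A × B) (A × B) ℂ) :
    (nsObservable ρ Λ * ((matRPow ρ (1/2) ⊗ₖ (1 : Matrix B B ℂ)) * J *
      (matRPow ρ (1/2) ⊗ₖ (1 : Matrix B B ℂ)))).trace = (Λ * J).trace := by
  set X := matRPow ρ (-(1/2)) ⊗ₖ (1 : Matrix B B ℂ)
  set S := matRPow ρ (1/2) ⊗ₖ (1 : Matrix B B ℂ)
  have hSX : S * X = supportProj ρ ⊗ₖ 1 := by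
    rw [← mul_kronecker_mul, matRPow_half_mul_matRPow_neg_half hρ, one_mul]
  have hXS : X * S = supportProj ρ ⊗ₖ 1 := by
    rw [← mul_kronecker_mul, matRPow_neg_half_mul_matRPow_half hρ, one_mul]
  unfold nsObservable
  calc (X * Λ * X * (S * J * S)).trace = ((S * X) * Λ * (X * S) * J).trace := by
        simp only [← Matrix.mul_assoc]
        rw [trace_mul_comm _ S]
        simp only [← Matrix.mul_assoc]
    _ = (Λ * J).trace := by
        rw [hSX, hXS, supportProj_kronecker_one_mul hρ hΛle hΛ,
          mul_supportProj_kronecker_one hρ hΛle hΛ]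

lemma trace_nsObservable_mul_kronecker (σ : Matrix B B ℂ) :
    (nsObservable ρ Λ * (ρ ⊗ₖ σ)).trace = (trFst Λ * σ).trace := by
  set X := matRPow ρ (-(1/2)) ⊗ₖ (1 : Matrix B B ℂ)
  have hXRX : X * (ρ ⊗ₖ σ) * X = supportProj ρ ⊗ₖ σ := by
    rw [← mul_kronecker_mul, ← mul_kronecker_mul, matRPow_neg_half_mul_mul_matRPow_neg_half hρ,
      one_mul, mul_one]
  unfold nsObservable
  calc (X * Λ * X * (ρ ⊗ₖ σ)).trace = (Λ * (X * (ρ ⊗ₖ σ) * X)).trace := by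
        simp only [Matrix.mul_assoc]
        rw [trace_mul_comm X]
        simp only [Matrix.mul_assoc]
    _ = (Λ * (1 ⊗ₖ σ)).trace := by
        rw [hXRX, show supportProj ρ ⊗ₖ σ = (supportProj ρ ⊗ₖ 1) * (1 ⊗ₖ σ) by
          rw [← mul_kronecker_mul, mul_one, one_mul], ← Matrix.mul_assoc,
          mul_supportProj_kronecker_one hρ hΛle hΛ]
    _ = (trFst Λ * σ).trace := trace_mul_one_kronecker Λ σ

end Observable

theorem ns_observable_props_general {A B : Type*} [Fintype A] [DecidableEq A]
    [Fintype B] [DecidableEq B]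
    (J : Matrix (A × B) (A × B) ℂ)
    (M : ℝ)
    (ρ : Matrix A A ℂ) (hρ : IsState ρ)
    (Λ : Matrix (A × B) (A × B) ℂ) (hΛpos : Λ.PosSemidef)
    (hΛle : ((ρ ⊗ₖ (1 : Matrix B B ℂ)) - Λ).PosSemidef)
    (hΛtr : trFst Λ = ((1 / M : ℂ)) • (1 : Matrix B B ℂ))
    (O : Matrix (A × B) (A × B) ℂ)
    (hO : O = (matRPow ρ (-(1/2)) ⊗ₖ (1 : Matrix B B ℂ)) * Λ *
      (matRPow ρ (-(1/2)) ⊗ₖ (1 : Matrix B B ℂ))) :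
    O.PosSemidef ∧
    ((1 : Matrix (A × B) (A × B) ℂ) - O).PosSemidef ∧
    (O * ((matRPow ρ (1/2) ⊗ₖ (1 : Matrix B B ℂ)) * J *
      (matRPow ρ (1/2) ⊗ₖ (1 : Matrix B B ℂ)))).trace = (Λ * J).trace ∧
    ∀ σ : Matrix B B ℂ, IsState σ → (O * (ρ ⊗ₖ σ)).trace = ((1 / M : ℂ)) := by
  obtain rfl : O = nsObservable ρ Λ := hO
  refine ⟨nsObservable_posSemidef hρ.1.isHermitian hΛpos,
    posSemidef_one_sub_nsObservable hρ.1 hΛle, trace_nsObservable_mul_conj hρ.1 hΛle hΛpos J,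
    fun σ hσ => ?_⟩
  rw [trace_nsObservable_mul_kronecker hρ.1 hΛle hΛpos, hΛtr, smul_mul, one_mul, trace_smul, hσ.2,
    smul_eq_mul, mul_one]

/-- Properties of the observable
`O = (ρ^{−1/2} ⊗ I_B) Λ (ρ^{−1/2} ⊗ I_B)` obtained from a feasible point `(ρ, Λ)` of
the fixed-input non-signaling program. -/
theorem ns_observable_props {A B : Type*} [Fintype A] [DecidableEq A] [Nonempty A]
    [Fintype B] [DecidableEq B]
    (J : Matrix (A × B) (A × B) ℂ) (hJ : IsChoi J)
    (M : ℝ) (hM : 1 ≤ M)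
    (ρ : Matrix A A ℂ) (hρ : IsState ρ)
    (Λ : Matrix (A × B) (A × B) ℂ) (hΛpos : Λ.PosSemidef)
    (hΛle : ((ρ ⊗ₖ (1 : Matrix B B ℂ)) - Λ).PosSemidef)
    (hΛtr : trFst Λ = ((1 / M : ℂ)) • (1 : Matrix B B ℂ))
    (O : Matrix (A × B) (A × B) ℂ)
    (hO : O = (matRPow ρ (-(1/2)) ⊗ₖ (1 : Matrix B B ℂ)) * Λ *
      (matRPow ρ (-(1/2)) ⊗ₖ (1 : Matrix B B ℂ))) :
    O.PosSemidef ∧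
    ((1 : Matrix (A × B) (A × B) ℂ) - O).PosSemidef ∧
    (O * ((matRPow ρ (1/2) ⊗ₖ (1 : Matrix B B ℂ)) * J *
      (matRPow ρ (1/2) ⊗ₖ (1 : Matrix B B ℂ)))).trace = (Λ * J).trace ∧
    ∀ σ : Matrix B B ℂ, IsState σ → (O * (ρ ⊗ₖ σ)).trace = ((1 / M : ℂ)) :=
  ns_observable_props_general J M ρ hρ Λ hΛpos hΛle hΛtr O hO

end QCoding
end

section
/- Let J be the Choi matrix of a quantum channel from a finite-dimensional system A to a finite-dimensional system B, and let M ≥ 1 be a real number. Then suc^MC(J, M) equals the supremum over quantum states ρ on R ≅ A and matrices O on R × B with 0 ≼ O ≼ I such that Tr[(ρ ⊗ σ)·O] ≤ 1/M for every quantum state σ on B, of Tr[(ρ^{1/2} ⊗ I_B)·J·(ρ^{1/2} ⊗ I_B) · O]. -/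
open Matrix Kronecker Filter ComplexOrder

namespace QCoding

/-!
With `S = ρ^{1/2} ⊗ I_B`, the substitution `Λ = M · S O S` is a bijection between the two feasible
sets and turns `(1/M) Tr[Λ J]` into `Tr[S J S O]`. The operator inequality `0 ≼ Λ ≼ M (ρ ⊗ I_B)`
becomes `0 ≼ O ≼ I`: in one direction conjugate by `S`; in the other take
`O = M⁻¹ S⁺ Λ S⁺` with the pseudo-inverse `S⁺`, which works because `Λ ≼ M S²` forces `Λ` to
vanish off the support of `S`. Finally `Tr[σ Tr_R(S O S)] = Tr[(ρ ⊗ σ) O]`, and `Tr_R Λ ≼ I_B`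
holds iff `Tr[σ Tr_R Λ] ≤ 1` for every state `σ`.
-/

open scoped MatrixOrder

section FunctionalCalculus

variable {m : Type*} [Fintype m] [DecidableEq m]

theorem hermApply_eq_cfc_s6 {H : Matrix m m ℂ} (hH : H.IsHermitian) (f : ℝ → ℝ) :
    hermApply H f = cfc f H := by
  rw [hH.cfc_eq, IsHermitian.cfc, hermApply, dif_pos hH, Unitary.conjStarAlgAut_apply]
  rfl

theorem isHermitian_matRPow {H : Matrix m m ℂ} (hH : H.IsHermitian) (p : ℝ) :
    (matRPow H p).IsHermitian := by
  rw [matRPow, hermApply_eq_cfc_s6 hH]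
  exact cfc_predicate _ H

theorem cfc_mul_cfc_of_nonneg {R : Matrix m m ℂ} (hR : 0 ≤ R) {f g h : ℝ → ℝ}
    (hfg : ∀ x, 0 ≤ x → f x * g x = h x) : cfc f R * cfc g R = cfc h R := by
  rw [← cfc_mul f g R (finite_real_spectrum.continuousOn _) (finite_real_spectrum.continuousOn _)]
  exact cfc_congr fun x hx => hfg x (spectrum_nonneg_of_nonneg hR hx)

theorem matRPow_half_mul_self {R : Matrix m m ℂ} (hR : 0 ≤ R) :
    matRPow R (1/2) * matRPow R (1/2) = R := by
  rw [matRPow, hermApply_eq_cfc_s6 (IsSelfAdjoint.of_nonneg hR).isHermitian,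
    cfc_mul_cfc_of_nonneg hR (h := id) fun x hx => by
      rw [← Real.sqrt_eq_rpow]; exact Real.mul_self_sqrt hx, cfc_id ℝ R]

theorem mul_eq_zero_of_le_of_mul_eq_zero {Λ R q : Matrix m m ℂ} (hΛ : 0 ≤ Λ) (hΛR : Λ ≤ R)
    (hRq : R * q = 0) (hq : IsSelfAdjoint q) : Λ * q = 0 := by
  obtain ⟨y, rfl⟩ := CStarAlgebra.nonneg_iff_eq_star_mul_self.mp hΛ
  have hle : star q * (star y * y) * q ≤ 0 := by
    simpa [hq.star_eq, Matrix.mul_assoc, hRq] using star_left_conjugate_le_conjugate hΛR q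
  have hyq : star (y * q) * (y * q) = 0 := by
    rw [star_mul, Matrix.mul_assoc, ← Matrix.mul_assoc (star y), ← Matrix.mul_assoc]
    exact le_antisymm hle (star_left_conjugate_nonneg hΛ q)
  rw [Matrix.mul_assoc, conjTranspose_mul_self_eq_zero.mp hyq, Matrix.mul_zero]

theorem rpow_half_mul_rpow_neg_half {x : ℝ} (hx : 0 ≤ x) :
    x ^ (1/2 : ℝ) * x ^ (-(1/2) : ℝ) = if x = 0 then 0 else 1 := by
  rcases hx.eq_or_lt with rfl | hx
  · simp
  · rw [← Real.rpow_add hx, if_neg hx.ne']; norm_num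

theorem rpow_neg_half_mul_self {x : ℝ} (hx : 0 ≤ x) : x ^ (-(1/2) : ℝ) * x = x ^ (1/2 : ℝ) := by
  rcases hx.eq_or_lt with rfl | hx
  · simp
  · nth_rw 2 [← Real.rpow_one x]
    rw [← Real.rpow_add hx]; norm_num

/-- `n = R^{-1/2}` is the pseudo-inverse of `s = R^{1/2}` (as `0 ^ p = 0` for `p ≠ 0`), and the
support projection `p = s n` of `R` fixes `Λ`; the witness is `O = n Λ n`. -/
theorem exists_eq_sqrt_conj_of_le {R Λ : Matrix m m ℂ} (hR : 0 ≤ R) (hΛ : 0 ≤ Λ) (hΛR : Λ ≤ R) :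
    ∃ O ∈ Set.Icc (0 : Matrix m m ℂ) 1, Λ = matRPow R (1/2) * O * matRPow R (1/2) := by
  simp only [matRPow, hermApply_eq_cfc_s6 (IsSelfAdjoint.of_nonneg hR).isHermitian]
  set s := cfc (fun x : ℝ => x ^ (1/2 : ℝ)) R
  set n := cfc (fun x : ℝ => x ^ (-(1/2) : ℝ)) R
  set p := cfc (fun x : ℝ => if x = 0 then 0 else 1) R
  have hsn : s * n = p := cfc_mul_cfc_of_nonneg hR fun x hx => rpow_half_mul_rpow_neg_half hx
  have hns : n * s = p := cfc_mul_cfc_of_nonneg hR fun x hx => by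
    rw [mul_comm, rpow_half_mul_rpow_neg_half hx]
  have hnRn : n * R * n = p := by
    conv_lhs => rw [← cfc_id' ℝ R]
    rw [cfc_mul_cfc_of_nonneg hR fun x hx => rpow_neg_half_mul_self hx, hsn]
  have h1p : 1 - p = cfc (fun x : ℝ => if x = 0 then 1 else 0) R := by
    rw [← cfc_one ℝ R, ← cfc_sub _ _ R (finite_real_spectrum.continuousOn _)
      (finite_real_spectrum.continuousOn _)]
    exact cfc_congr fun x _ => by split_ifs <;> norm_num
  have hRp : R * (1 - p) = 0 := by
    conv_lhs => rw [← cfc_id' ℝ R]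
    rw [h1p, cfc_mul_cfc_of_nonneg hR (h := 0) fun x _ => by split_ifs with h <;> simp [h],
      cfc_zero]
  have hp : IsSelfAdjoint p := cfc_predicate _ R
  have hΛp : Λ * p = Λ := by
    have := mul_eq_zero_of_le_of_mul_eq_zero hΛ hΛR hRp (h1p ▸ cfc_predicate _ R)
    rwa [Matrix.mul_sub, Matrix.mul_one, sub_eq_zero, eq_comm] at this
  have hpΛ : p * Λ = Λ := by
    simpa [hp.star_eq, (IsSelfAdjoint.of_nonneg hΛ).star_eq] using congrArg star hΛp
  have hn : IsSelfAdjoint n := cfc_predicate _ R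
  refine ⟨n * Λ * n, ⟨hn.conjugate_nonneg hΛ, ?_⟩, ?_⟩
  · calc n * Λ * n ≤ n * R * n := hn.conjugate_le_conjugate hΛR
      _ = p := hnRn
      _ ≤ 1 := cfc_le_one _ R fun x _ => by split_ifs <;> norm_num
  · calc Λ = p * Λ * p := by rw [hpΛ, hΛp]
      _ = s * n * Λ * (n * s) := by rw [hsn, hns]
      _ = s * (n * Λ * n) * s := by simp only [Matrix.mul_assoc]

theorem mem_Icc_iff_exists_eq_sqrt_conj {R Λ : Matrix m m ℂ} (hR : 0 ≤ R) :
    Λ ∈ Set.Icc 0 R ↔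
      ∃ O ∈ Set.Icc (0 : Matrix m m ℂ) 1, Λ = matRPow R (1/2) * O * matRPow R (1/2) := by
  have hs : IsSelfAdjoint (matRPow R (1/2)) :=
    (isHermitian_matRPow (IsSelfAdjoint.of_nonneg hR).isHermitian _).isSelfAdjoint
  constructor
  · rintro ⟨hΛ, hΛR⟩
    exact exists_eq_sqrt_conj_of_le hR hΛ hΛR
  · rintro ⟨O, ⟨hO, hO1⟩, rfl⟩
    refine ⟨hs.conjugate_nonneg hO, ?_⟩
    calc matRPow R (1/2) * O * matRPow R (1/2)
        ≤ matRPow R (1/2) * 1 * matRPow R (1/2) := hs.conjugate_le_conjugate hO1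
      _ = R := by rw [Matrix.mul_one, matRPow_half_mul_self hR]

end FunctionalCalculus

section States

variable {n : Type*} [Fintype n]

theorem IsState.trace_mul_re_nonneg {σ Y : Matrix n n ℂ} (hσ : IsState σ) (hY : Y.PosSemidef) :
    0 ≤ (σ * Y).trace.re := by
  classical
  obtain ⟨c, rfl⟩ := CStarAlgebra.nonneg_iff_eq_star_mul_self.mp hσ.1.nonneg
  rw [Matrix.mul_assoc, trace_mul_comm]
  exact (RCLike.nonneg_iff.mp (hY.mul_mul_conjTranspose_same c).trace_nonneg).1

/-- For `←`, test `Y` against the normalised pure state `v v† / (v† v)`. -/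
theorem posSemidef_iff_forall_isState {Y : Matrix n n ℂ} (hY : Y.IsHermitian) :
    Y.PosSemidef ↔ ∀ σ : Matrix n n ℂ, IsState σ → 0 ≤ (σ * Y).trace.re := by
  refine ⟨fun hY σ hσ => hσ.trace_mul_re_nonneg hY, fun h => ?_⟩
  refine .of_dotProduct_mulVec_nonneg hY fun v => ?_
  rcases eq_or_ne v 0 with rfl | hv
  · simp
  obtain ⟨c, hc, hvv⟩ := RCLike.pos_iff_exists_ofReal.mp (dotProduct_star_self_pos_iff.mpr hv)
  have hσ : IsState ((c⁻¹ : ℂ) • vecMulVec v (star v)) := by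
    refine ⟨(posSemidef_vecMulVec_self_star v).smul (by simpa using hc.le), ?_⟩
    rw [trace_smul, trace_vecMulVec, dotProduct_comm, ← hvv, smul_eq_mul]
    exact inv_mul_cancel₀ (by simpa using hc.ne')
  have := h _ hσ
  rw [Matrix.smul_mul, trace_smul, vecMulVec_mul, trace_vecMulVec, dotProduct_comm,
    ← dotProduct_mulVec] at this
  rw [RCLike.nonneg_iff]
  refine ⟨?_, hY.im_star_dotProduct_mulVec_self v⟩
  have : 0 ≤ c⁻¹ * (star v ⬝ᵥ Y *ᵥ v).re := by simpa using this
  exact (mul_nonneg_iff_of_pos_left (inv_pos.mpr hc)).mp this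

end States

section PartialTrace

theorem IsHermitian.trFst {A B : Type*} [Fintype A] {Y : Matrix (A × B) (A × B) ℂ}
    (hY : Y.IsHermitian) : (trFst Y).IsHermitian := by
  ext b b'
  simp only [conjTranspose_apply, QCoding.trFst, star_sum]
  exact Finset.sum_congr rfl fun r _ => hY.apply _ _

theorem trace_mul_trFst {A B : Type*} [Fintype A] [DecidableEq A] [Fintype B]
    (σ : Matrix B B ℂ) (Y : Matrix (A × B) (A × B) ℂ) :
    (σ * trFst Y).trace = (((1 : Matrix A A ℂ) ⊗ₖ σ) * Y).trace := by
  simp only [trace, diag_apply, mul_apply, QCoding.trFst, Finset.mul_sum, kroneckerMap_apply,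
    one_apply, ite_mul, one_mul, zero_mul, Fintype.sum_prod_type, Finset.sum_ite_irrel,
    Finset.sum_const_zero, Finset.sum_ite_eq, Finset.mem_univ, if_true]
  rw [Finset.sum_comm (s := Finset.univ (α := A))]
  exact Finset.sum_congr rfl fun _ _ => Finset.sum_comm

end PartialTrace

noncomputable def kroneckerOneStarAlgHom (A B : Type*) [Fintype A] [DecidableEq A] [Fintype B]
    [DecidableEq B] : Matrix A A ℂ →⋆ₐ[ℂ] Matrix (A × B) (A × B) ℂ where
  toFun X := X ⊗ₖ 1
  map_one' := one_kronecker_one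
  map_mul' X Y := by rw [← mul_kronecker_mul, mul_one]
  map_zero' := zero_kronecker _
  map_add' X Y := add_kronecker _ _ _
  commutes' r := by simp [Algebra.algebraMap_eq_smul_one, smul_kronecker]
  map_star' X := by simp [star_eq_conjTranspose, conjTranspose_kronecker]

theorem matRPow_kronecker_one {A B : Type*} [Fintype A] [DecidableEq A] [Fintype B]
    [DecidableEq B] {ρ : Matrix A A ℂ} (hρ : ρ.IsHermitian) (p : ℝ) :
    matRPow ρ p ⊗ₖ (1 : Matrix B B ℂ) = matRPow (ρ ⊗ₖ (1 : Matrix B B ℂ)) p := by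
  have hρ1 : (ρ ⊗ₖ (1 : Matrix B B ℂ)).IsHermitian :=
    (hρ.isSelfAdjoint.map (kroneckerOneStarAlgHom A B)).isHermitian
  rw [matRPow, matRPow, hermApply_eq_cfc_s6 hρ, hermApply_eq_cfc_s6 hρ1]
  exact (kroneckerOneStarAlgHom A B).map_cfc _ ρ (finite_real_spectrum.continuousOn _)
    (LinearMap.continuous_of_finiteDimensional (kroneckerOneStarAlgHom A B).toLinearMap)
    hρ.isSelfAdjoint hρ1.isSelfAdjoint

theorem trace_conj_mul {m : Type*} [Fintype m] (S X Y : Matrix m m ℂ) :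
    ((S * X * S) * Y).trace = ((S * Y * S) * X).trace := by
  calc ((S * X * S) * Y).trace = (S * (X * S * Y)).trace := by simp only [Matrix.mul_assoc]
    _ = (X * (S * Y * S)).trace := by rw [trace_mul_comm]; simp only [Matrix.mul_assoc]
    _ = ((S * Y * S) * X).trace := trace_mul_comm _ _

theorem posSemidef_one_sub_iff_forall_isState {n : Type*} [Fintype n] [DecidableEq n]
    {K : Matrix n n ℂ} (hK : K.IsHermitian) :
    ((1 : Matrix n n ℂ) - K).PosSemidef ↔
      ∀ σ : Matrix n n ℂ, IsState σ → (σ * K).trace.re ≤ 1 := by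
  rw [posSemidef_iff_forall_isState (isHermitian_one.sub hK)]
  refine forall₂_congr fun σ hσ => ?_
  rw [Matrix.mul_sub, Matrix.mul_one, trace_sub, hσ.2, Complex.sub_re, Complex.one_re, sub_nonneg]

section Channel

variable {A B : Type*} [Fintype A] [DecidableEq A] [Fintype B] [DecidableEq B]

theorem trace_one_kronecker_mul_sqrt_conj {ρ : Matrix A A ℂ} (hρ : ρ.PosSemidef)
    (σ : Matrix B B ℂ) (O : Matrix (A × B) (A × B) ℂ) :
    (((1 : Matrix A A ℂ) ⊗ₖ σ) * ((matRPow ρ (1/2) ⊗ₖ (1 : Matrix B B ℂ)) * O *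
      (matRPow ρ (1/2) ⊗ₖ (1 : Matrix B B ℂ)))).trace = ((ρ ⊗ₖ σ) * O).trace := by
  rw [trace_mul_comm, trace_conj_mul, trace_mul_comm, ← mul_kronecker_mul, ← mul_kronecker_mul,
    Matrix.mul_one, Matrix.one_mul, Matrix.mul_one, matRPow_half_mul_self hρ.nonneg,
    trace_mul_comm]

def IsMCFeasible (M : ℝ) (ρ : Matrix A A ℂ) (Λ : Matrix (A × B) (A × B) ℂ) : Prop :=
  Λ.PosSemidef ∧ ((M : ℂ) • (ρ ⊗ₖ (1 : Matrix B B ℂ)) - Λ).PosSemidef ∧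
    ((1 : Matrix B B ℂ) - trFst Λ).PosSemidef

def IsMCTest (M : ℝ) (ρ : Matrix A A ℂ) (O : Matrix (A × B) (A × B) ℂ) : Prop :=
  O.PosSemidef ∧ ((1 : Matrix (A × B) (A × B) ℂ) - O).PosSemidef ∧
    ∀ σ : Matrix B B ℂ, IsState σ → ((ρ ⊗ₖ σ) * O).trace.re ≤ 1 / M

variable {M : ℝ} {ρ : Matrix A A ℂ}

theorem posSemidef_one_sub_trFst_smul_sqrt_conj_iff (hρ : ρ.PosSemidef) (hM : 0 < M)
    {O : Matrix (A × B) (A × B) ℂ} (hO : O.IsHermitian) :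
    ((1 : Matrix B B ℂ) - trFst ((M : ℂ) • ((matRPow ρ (1/2) ⊗ₖ (1 : Matrix B B ℂ)) * O *
      (matRPow ρ (1/2) ⊗ₖ (1 : Matrix B B ℂ))))).PosSemidef ↔
      ∀ σ : Matrix B B ℂ, IsState σ → ((ρ ⊗ₖ σ) * O).trace.re ≤ 1 / M := by
  have hS : IsSelfAdjoint (matRPow ρ (1/2) ⊗ₖ (1 : Matrix B B ℂ)) := by
    rw [matRPow_kronecker_one hρ.1]
    exact (isHermitian_matRPow (hρ.kronecker PosSemidef.one).1 _).isSelfAdjoint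
  rw [posSemidef_one_sub_iff_forall_isState (IsHermitian.trFst
    (IsSelfAdjoint.smul (Complex.conj_ofReal M) (hO.isSelfAdjoint.conjugate_self hS)).isHermitian)]
  refine forall₂_congr fun σ hσ => ?_
  rw [trace_mul_trFst, Matrix.mul_smul, trace_smul, trace_one_kronecker_mul_sqrt_conj hρ,
    smul_eq_mul, Complex.re_ofReal_mul, ← le_div_iff₀' hM]

theorem IsMCFeasible.exists_isMCTest (hρ : ρ.PosSemidef) (hM : 0 < M)
    {Λ : Matrix (A × B) (A × B) ℂ} (hΛ : IsMCFeasible M ρ Λ) :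
    ∃ O, IsMCTest M ρ O ∧ Λ = (M : ℂ) • ((matRPow ρ (1/2) ⊗ₖ (1 : Matrix B B ℂ)) * O *
      (matRPow ρ (1/2) ⊗ₖ (1 : Matrix B B ℂ))) := by
  obtain ⟨hΛ0, hΛR, htr⟩ := hΛ
  have hM' : (0 : ℂ) < M := by exact_mod_cast hM
  have hR : 0 ≤ ρ ⊗ₖ (1 : Matrix B B ℂ) := (hρ.kronecker PosSemidef.one).nonneg
  obtain ⟨O, ⟨hO, hO1⟩, hΛO⟩ := exists_eq_sqrt_conj_of_le hR
    (smul_nonneg (inv_nonneg.mpr hM'.le) hΛ0.nonneg) (by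
      have := smul_le_smul_of_nonneg_left (Matrix.le_iff.mpr hΛR) (inv_nonneg.mpr hM'.le)
      rwa [smul_smul, inv_mul_cancel₀ hM'.ne', one_smul] at this)
  rw [← matRPow_kronecker_one hρ.1] at hΛO
  have hΛ : Λ = (M : ℂ) • ((matRPow ρ (1/2) ⊗ₖ (1 : Matrix B B ℂ)) * O *
      (matRPow ρ (1/2) ⊗ₖ (1 : Matrix B B ℂ))) := by
    rw [← hΛO, smul_smul, mul_inv_cancel₀ hM'.ne', one_smul]
  refine ⟨O, ⟨hO.posSemidef, hO1, ?_⟩, hΛ⟩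
  exact (posSemidef_one_sub_trFst_smul_sqrt_conj_iff hρ hM hO.posSemidef.1).mp (hΛ ▸ htr)

theorem IsMCTest.isMCFeasible (hρ : ρ.PosSemidef) (hM : 0 < M)
    {O : Matrix (A × B) (A × B) ℂ} (hO : IsMCTest M ρ O) :
    IsMCFeasible M ρ ((M : ℂ) • ((matRPow ρ (1/2) ⊗ₖ (1 : Matrix B B ℂ)) * O *
      (matRPow ρ (1/2) ⊗ₖ (1 : Matrix B B ℂ)))) := by
  obtain ⟨hO0, hO1, htr⟩ := hO
  have hM' : (0 : ℂ) ≤ M := by exact_mod_cast hM.le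
  have hR : 0 ≤ ρ ⊗ₖ (1 : Matrix B B ℂ) := (hρ.kronecker PosSemidef.one).nonneg
  obtain ⟨h0, hle⟩ := (mem_Icc_iff_exists_eq_sqrt_conj hR).mpr ⟨O, ⟨hO0.nonneg, hO1⟩, rfl⟩
  rw [← matRPow_kronecker_one hρ.1] at h0 hle
  exact ⟨(smul_nonneg hM' h0).posSemidef, smul_le_smul_of_nonneg_left hle hM',
    (posSemidef_one_sub_trFst_smul_sqrt_conj_iff hρ hM hO0.1).mpr htr⟩

theorem one_div_mul_trace_smul_sqrt_conj_mul (hM : M ≠ 0)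
    (J O : Matrix (A × B) (A × B) ℂ) :
    1 / M * (((M : ℂ) • ((matRPow ρ (1/2) ⊗ₖ (1 : Matrix B B ℂ)) * O *
      (matRPow ρ (1/2) ⊗ₖ (1 : Matrix B B ℂ)))) * J).trace.re =
    (((matRPow ρ (1/2) ⊗ₖ (1 : Matrix B B ℂ)) * J *
      (matRPow ρ (1/2) ⊗ₖ (1 : Matrix B B ℂ))) * O).trace.re := by
  rw [Matrix.smul_mul, trace_smul, smul_eq_mul, Complex.re_ofReal_mul, trace_conj_mul,
    ← mul_assoc, one_div_mul_cancel hM, one_mul]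

end Channel

theorem sucMC_dual_test_general {A B : Type*} [Fintype A] [DecidableEq A]
    [Fintype B] [DecidableEq B]
    (J : Matrix (A × B) (A × B) ℂ)
    (M : ℝ) (hM : 1 ≤ M) :
    sucMC J M = sSup {x | ∃ ρ : Matrix A A ℂ, ∃ O : Matrix (A × B) (A × B) ℂ,
      IsState ρ ∧ O.PosSemidef ∧
      ((1 : Matrix (A × B) (A × B) ℂ) - O).PosSemidef ∧
      (∀ σ : Matrix B B ℂ, IsState σ → ((ρ ⊗ₖ σ) * O).trace.re ≤ 1 / M) ∧
      x = (((matRPow ρ (1/2) ⊗ₖ (1 : Matrix B B ℂ)) * J *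
            (matRPow ρ (1/2) ⊗ₖ (1 : Matrix B B ℂ))) * O).trace.re} := by
  have hM0 : 0 < M := by linarith
  unfold sucMC
  congr 1
  ext x
  constructor
  · rintro ⟨ρ, Λ, hρ, hΛ, hΛR, htr, rfl⟩
    obtain ⟨O, ⟨hO, hO1, hσ⟩, rfl⟩ := IsMCFeasible.exists_isMCTest hρ.1 hM0 ⟨hΛ, hΛR, htr⟩
    exact ⟨ρ, O, hρ, hO, hO1, hσ, one_div_mul_trace_smul_sqrt_conj_mul hM0.ne' J O⟩
  · rintro ⟨ρ, O, hρ, hO, hO1, hσ, rfl⟩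
    obtain ⟨hΛ, hΛR, htr⟩ := IsMCTest.isMCFeasible hρ.1 hM0 ⟨hO, hO1, hσ⟩
    exact ⟨ρ, _, hρ, hΛ, hΛR, htr, (one_div_mul_trace_smul_sqrt_conj_mul hM0.ne' J O).symm⟩

/-- Hypothesis-testing formulation of the meta-converse success
probability (sup over states and tests with a uniform constraint over `σ`). -/
theorem sucMC_dual_test {A B : Type*} [Fintype A] [DecidableEq A] [Nonempty A]
    [Fintype B] [DecidableEq B]
    (J : Matrix (A × B) (A × B) ℂ) (hJ : IsChoi J)
    (M : ℝ) (hM : 1 ≤ M) :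
    sucMC J M = sSup {x | ∃ ρ : Matrix A A ℂ, ∃ O : Matrix (A × B) (A × B) ℂ,
      IsState ρ ∧ O.PosSemidef ∧
      ((1 : Matrix (A × B) (A × B) ℂ) - O).PosSemidef ∧
      (∀ σ : Matrix B B ℂ, IsState σ → ((ρ ⊗ₖ σ) * O).trace.re ≤ 1 / M) ∧
      x = (((matRPow ρ (1/2) ⊗ₖ (1 : Matrix B B ℂ)) * J *
            (matRPow ρ (1/2) ⊗ₖ (1 : Matrix B B ℂ))) * O).trace.re} :=
  sucMC_dual_test_general J M hM

end QCoding
end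

section
/- Let J be the Choi matrix of a quantum channel from a finite-dimensional system A to a finite-dimensional system B, let n ≥ 1 be an integer, and let M ≥ 1 be a real number. Then the non-signaling success probability suc^NS(J^{(n)}, M) of the n-fold tensor power channel equals the supremum of the same semidefinite program restricted to permutation-invariant states ρ on R^n, i.e. to states ρ on-(Fin n → A) satisfying ρ(f∘π, g∘π) = ρ(f, g) for all permutations π of Fin n and all f, g : Fin n → A. -/
/-!
Permuting the `n` tensor factors (simultaneously on the input and output systems) maps
feasible pairs `(ρ, Λ)` of the semidefinite program to feasible pairs and fixes `J^{(n)}`,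
hence the objective. All constraints are linear or convex, so the average of a feasible pair
over the symmetric group (its twirl) is again feasible, has the same value, and its input
state is permutation invariant.
-/

open Matrix Kronecker Filter ComplexOrder

namespace QCoding

section Twirl

variable (G : Type*) {ι κ 𝕜 : Type*} [Group G] [MulAction G ι] [RCLike 𝕜]

def IsInvariant (X : Matrix ι ι 𝕜) : Prop :=
  ∀ (g : G) (i j : ι), X (g • i) (g • j) = X i j

def twirl [Fintype G] : Matrix ι ι 𝕜 →ₗ[𝕜] Matrix ι ι 𝕜 where
  toFun X := (Fintype.card G : 𝕜)⁻¹ • ∑ g : G, X.submatrix (g • ·) (g • ·)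
  map_add' X Y := by
    ext i j
    simp [Matrix.sum_apply, Finset.sum_add_distrib, mul_add]
  map_smul' c X := by
    ext i j
    simp [Matrix.sum_apply, Finset.mul_sum, mul_left_comm]

variable {G}

lemma isInvariant_one [DecidableEq ι] : IsInvariant G (1 : Matrix ι ι 𝕜) := by
  intro g i j
  simp [one_apply]

variable [Fintype G]

lemma twirl_apply (X : Matrix ι ι 𝕜) (i j : ι) :
    twirl G X i j = (Fintype.card G : 𝕜)⁻¹ * ∑ g : G, X (g • i) (g • j) := by
  simp [twirl, Matrix.sum_apply]

lemma isInvariant_twirl (X : Matrix ι ι 𝕜) : IsInvariant G (twirl G X) := by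
  intro h i j
  simp only [twirl_apply, smul_smul]
  congr 1
  exact Fintype.sum_equiv (Equiv.mulRight h) _ _ fun g => rfl

lemma twirl_eq_self {X : Matrix ι ι 𝕜} (hX : IsInvariant G X) : twirl G X = X := by
  ext i j
  rw [twirl_apply, Finset.sum_congr rfl fun g _ => hX g i j]
  simp

lemma twirl_posSemidef {X : Matrix ι ι 𝕜} (hX : X.PosSemidef) : (twirl G X).PosSemidef := by
  refine (posSemidef_sum _ fun g _ => hX.submatrix _).smul ?_
  positivity

lemma trace_twirl_mul [Fintype ι] (X : Matrix ι ι 𝕜) {Y : Matrix ι ι 𝕜}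
    (hY : IsInvariant G Y) :
    (twirl G X * Y).trace = (X * Y).trace := by
  have h_summand (g : G) : (X.submatrix (g • ·) (g • ·) * Y).trace = (X * Y).trace := by
    let e : Equiv.Perm ι := MulAction.toPerm g
    have hYe : Y.submatrix e e = Y := ext (hY g)
    conv_lhs => rw [← hYe]
    exact (congrArg trace (submatrix_mul_equiv X Y e e e)).trans
      (Equiv.sum_comp e fun i => (X * Y) i i)
  simp only [twirl, LinearMap.coe_mk, AddHom.coe_mk, smul_mul, Finset.sum_mul, trace_smul,
    trace_sum, h_summand, Finset.sum_const, Finset.card_univ, nsmul_eq_mul, smul_eq_mul]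
  field_simp

lemma trace_twirl [Fintype ι] (X : Matrix ι ι 𝕜) : (twirl G X).trace = X.trace := by
  have h_summand (g : G) : ∑ i, X (g • i) (g • i) = ∑ i, X i i :=
    Equiv.sum_comp (MulAction.toPerm g : Equiv.Perm ι) fun i => X i i
  simp only [trace, diag, twirl_apply, ← Finset.mul_sum]
  rw [Finset.sum_comm]
  simp only [h_summand, Finset.sum_const, Finset.card_univ, nsmul_eq_mul]
  field_simp

lemma twirl_kronecker [MulAction G κ] (X : Matrix ι ι 𝕜) {Y : Matrix κ κ 𝕜}
    (hY : IsInvariant G Y) : twirl G (X ⊗ₖ Y) = twirl G X ⊗ₖ Y := by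
  ext ⟨i, k⟩ ⟨j, l⟩
  simp only [twirl_apply, kroneckerMap_apply, Prod.smul_mk, hY _ k l, Finset.sum_mul, mul_assoc]

end Twirl

lemma trFst_twirl {G R B : Type*} [Group G] [Fintype G] [MulAction G R] [MulAction G B]
    [Fintype R] (Λ : Matrix (R × B) (R × B) ℂ) : trFst (twirl G Λ) = twirl G (trFst Λ) := by
  ext b b'
  simp only [trFst, twirl_apply, Prod.smul_mk, ← Finset.mul_sum]
  rw [Finset.sum_comm]
  congr 1
  refine Finset.sum_congr rfl fun g _ => ?_
  exact Equiv.sum_comp (MulAction.toPerm g) fun r => Λ (r, g • b) (r, g • b')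

-- `π • f = f ∘ π⁻¹`: permutations of the `n` tensor factors act on `Fin n → A`.
attribute [local instance] arrowAction

lemma isInvariant_perm_iff {α 𝕜 : Type*} {n : ℕ}
    {Z : Matrix (Fin n → α) (Fin n → α) 𝕜} :
    IsInvariant (Equiv.Perm (Fin n)) Z ↔
      ∀ (π : Equiv.Perm (Fin n)) f g, Z (f ∘ π) (g ∘ π) = Z f g :=
  ⟨fun h π => h π⁻¹, fun h π => h π⁻¹⟩

lemma isInvariant_choiPow {A B : Type*} (J : Matrix (A × B) (A × B) ℂ) (n : ℕ) :
    IsInvariant (Equiv.Perm (Fin n)) (choiPow J n) := by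
  rintro π ⟨f, g⟩ ⟨f', g'⟩
  simp only [choiPow, Prod.smul_mk]
  exact Equiv.prod_comp π⁻¹ fun k => J (f k, g k) (f' k, g' k)

theorem sucNS_perm_invariant_general {A B : Type*} [Fintype A]
    [Fintype B] [DecidableEq B]
    (J : Matrix (A × B) (A × B) ℂ)
    (n : ℕ) (M : ℝ) :
    sucNS (choiPow J n) M =
    sSup {x | ∃ ρ : Matrix (Fin n → A) (Fin n → A) ℂ,
      ∃ Λ : Matrix ((Fin n → A) × (Fin n → B)) ((Fin n → A) × (Fin n → B)) ℂ,
      IsState ρ ∧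
      (∀ π : Equiv.Perm (Fin n), ∀ f g : Fin n → A, ρ (f ∘ π) (g ∘ π) = ρ f g) ∧
      Λ.PosSemidef ∧
      ((M : ℂ) • (ρ ⊗ₖ (1 : Matrix (Fin n → B) (Fin n → B) ℂ)) - Λ).PosSemidef ∧
      trFst Λ = 1 ∧
      x = (1 / M) * (Λ * choiPow J n).trace.re} := by
  let G := Equiv.Perm (Fin n)
  refine congrArg sSup (Set.ext fun x => ⟨?_, ?_⟩)
  · rintro ⟨ρ, Λ, ⟨hρ, hρtr⟩, hΛ, hgap, htr, rfl⟩
    refine ⟨twirl G ρ, twirl G Λ, ⟨twirl_posSemidef hρ, (trace_twirl ρ).trans hρtr⟩,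
      isInvariant_perm_iff.1 (isInvariant_twirl ρ), twirl_posSemidef hΛ, ?_, ?_, ?_⟩
    · rw [← twirl_kronecker ρ isInvariant_one, ← map_smul, ← map_sub]
      exact twirl_posSemidef hgap
    · rw [trFst_twirl, htr, twirl_eq_self isInvariant_one]
    · rw [trace_twirl_mul Λ (isInvariant_choiPow J n)]
  · rintro ⟨ρ, Λ, hρ, -, hΛ, hgap, htr, hx⟩
    exact ⟨ρ, Λ, hρ, hΛ, hgap, htr, hx⟩

/-- For the `n`-fold tensor power channel, the non-signaling success
probability can be computed restricting to permutation-invariant input states. -/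
theorem sucNS_perm_invariant {A B : Type*} [Fintype A] [DecidableEq A] [Nonempty A]
    [Fintype B] [DecidableEq B]
    (J : Matrix (A × B) (A × B) ℂ) (hJ : IsChoi J)
    (n : ℕ) (hn : 1 ≤ n) (M : ℝ) (hM : 1 ≤ M) :
    sucNS (choiPow J n) M =
    sSup {x | ∃ ρ : Matrix (Fin n → A) (Fin n → A) ℂ,
      ∃ Λ : Matrix ((Fin n → A) × (Fin n → B)) ((Fin n → A) × (Fin n → B)) ℂ,
      IsState ρ ∧
      (∀ π : Equiv.Perm (Fin n), ∀ f g : Fin n → A, ρ (f ∘ π) (g ∘ π) = ρ f g) ∧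
      Λ.PosSemidef ∧
      ((M : ℂ) • (ρ ⊗ₖ (1 : Matrix (Fin n → B) (Fin n → B) ℂ)) - Λ).PosSemidef ∧
      trFst Λ = 1 ∧
      x = (1 / M) * (Λ * choiPow J n).trace.re} :=
  sucNS_perm_invariant_general J n M

end QCoding
end
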